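/- arXiv:2003.05887 — 3 statements merged into one kernel-verified Lean document; each statement's English description precedes it below -/
import Mathlib

section
/- For every real α > 0 with α ≠ 1 and every real X ≥ 1, the error in the Euler–Maclaurin approximation satisfies the lower bound: ζ(α) − 1/((α−1)X^{α−1}) − ∑_{n ≤ X} 1/n^α ≥ −1/X^α. -/
/-!
For `0 < s`, `s ≠ 1`, write `T(s) = ∑_{m ≥ 1} ∫_m^{m+1} (x - m) x^{-s-1} dx` (`termTSum`).
For `s > 1`, `ζ(s) = 1/(s-1) + 1 - s T(s)` (`ZetaAsymptotics.zeta_limit_aux1`). The identity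
persists for `0 < s < 1` by analytic continuation: `s (s-1)` times the `m`-th integral equals
`m^{1-s} - (m+1)^{1-s} - (s-1)(m+1)^{-s}`, which is entire in `s` and `O(|s|² m^{-Re s - 1})`, so
`(s-1) ζ(s) = s - s(s-1) T(s)` holds on the whole half-plane `Re s > 0`.

Since `x - m ≤ 1`, the part of `T(s)` beyond `N = ⌊X⌋` is at most `(N+1)^{-s}/s`, whence
`ζ(s) - ∑_{n ≤ N} n^{-s} ≥ (N+1)^{1-s}/(s-1)`. Finally
`(X^{1-s} - (N+1)^{1-s})/(s-1) = ∫_X^{N+1} x^{-s} dx ≤ X^{-s}` because `N + 1 - X ≤ 1`.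
-/

open Real Set Filter Topology MeasureTheory ZetaAsymptotics

lemma rpow_one_sub_sub_div_le_mul_rpow_neg {s a b : ℝ} (hs : 0 ≤ s) (hs1 : s ≠ 1) (ha : 0 < a)
    (hab : a ≤ b) : (a ^ (1 - s) - b ^ (1 - s)) / (s - 1) ≤ (b - a) * a ^ (-s) := by
  have h0 : (0 : ℝ) ∉ uIcc a b := notMem_uIcc_of_lt ha (ha.trans_le hab)
  calc (a ^ (1 - s) - b ^ (1 - s)) / (s - 1)
      = ∫ x in a..b, x ^ (-s) := by
        rw [integral_rpow (Or.inr ⟨fun h ↦ hs1 (by linarith), h0⟩),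
          show -s + 1 = 1 - s by ring,
          ← neg_div_neg_eq, neg_sub, neg_sub]
    _ ≤ ∫ _ in a..b, a ^ (-s) :=
        intervalIntegral.integral_mono_on hab (intervalIntegral.intervalIntegrable_rpow (Or.inr h0))
          intervalIntegrable_const fun x hx ↦ rpow_le_rpow_of_nonpos ha hx.1 (by linarith)
    _ = (b - a) * a ^ (-s) := by simp

lemma riemannZeta₁_eq_mul {s : ℂ} (hs : s ≠ 1) :
    riemannZeta₁ s = (s - 1) * riemannZeta s := by
  rw [riemannZeta_eq_inv_sub_mul hs, ← mul_assoc, mul_inv_cancel₀ (sub_ne_zero.mpr hs), one_mul]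

namespace ZetaAsymptotics

lemma mul_sub_one_mul_term {m : ℕ} (hm : 0 < m) (s : ℝ) :
    s * (s - 1) * term m s
      = (m : ℝ) ^ (1 - s) - ((m : ℝ) + 1) ^ (1 - s) - (s - 1) * ((m : ℝ) + 1) ^ (-s) := by
  have hpos : ∀ x ∈ uIcc (m : ℝ) (m + 1), 0 < x := fun x hx ↦
    (Nat.cast_pos.mpr hm).trans_le (uIcc_of_le (by linarith : (m : ℝ) ≤ m + 1) ▸ hx).1
  have hderiv : ∀ x ∈ uIcc (m : ℝ) (m + 1),
      HasDerivAt (fun x ↦ -x ^ (1 - s) - (s - 1) * ((x - m) * x ^ (-s)))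
        (s * (s - 1) * ((x - m) / x ^ (s + 1))) x := by
    intro x hx
    have hx0 := hpos x hx
    have h := ((hasDerivAt_rpow_const (p := 1 - s) (Or.inl hx0.ne')).neg).sub
      ((((hasDerivAt_id x).sub_const (m : ℝ)).mul
        (hasDerivAt_rpow_const (p := -s) (Or.inl hx0.ne'))).const_mul (s - 1))
    refine h.congr_deriv ?_
    rw [show 1 - s - 1 = -s by ring, show -s - 1 = -(s + 1) by ring, rpow_neg hx0.le,
      rpow_neg hx0.le, rpow_add_one hx0.ne']
    simp only [id]
    field_simp
    ring
  rw [term, ← intervalIntegral.integral_const_mul,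
    intervalIntegral.integral_eq_sub_of_hasDerivAt hderiv]
  · ring
  · refine (ContinuousOn.intervalIntegrable fun x hx ↦
      ContinuousAt.continuousWithinAt ?_).const_mul _
    have hx0 := hpos x hx
    exact (continuousAt_id.sub continuousAt_const).div
      (continuousAt_id.rpow_const (Or.inl hx0.ne')) (rpow_pos_of_pos hx0 _).ne'

lemma mul_term_eq {m : ℕ} (hm : 0 < m) {s : ℝ} (hs1 : s ≠ 1) :
    s * term m s
      = ((m : ℝ) ^ (1 - s) - ((m : ℝ) + 1) ^ (1 - s)) / (s - 1) - ((m : ℝ) + 1) ^ (-s) := by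
  rw [eq_sub_iff_add_eq, eq_div_iff (sub_ne_zero.mpr hs1)]
  linear_combination mul_sub_one_mul_term hm s

lemma mul_term_le {m : ℕ} (hm : 0 < m) {s : ℝ} (hs : 0 ≤ s) (hs1 : s ≠ 1) :
    s * term m s ≤ (m : ℝ) ^ (-s) - ((m : ℝ) + 1) ^ (-s) := by
  rw [mul_term_eq hm hs1]
  linarith [rpow_one_sub_sub_div_le_mul_rpow_neg hs hs1 (Nat.cast_pos.mpr hm)
    (le_add_of_nonneg_right zero_le_one)]

lemma sum_range_mul_term_add_le {M : ℕ} (hM : 0 < M) {s : ℝ} (hs : 0 ≤ s) (hs1 : s ≠ 1)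
    (K : ℕ) : ∑ n ∈ Finset.range K, s * term (n + M) s ≤ (M : ℝ) ^ (-s) := by
  calc ∑ n ∈ Finset.range K, s * term (n + M) s
      ≤ ∑ n ∈ Finset.range K,
          (((n + M : ℕ) : ℝ) ^ (-s) - ((n + 1 + M : ℕ) : ℝ) ^ (-s)) := by
        refine Finset.sum_le_sum fun n _ ↦ ?_
        refine (mul_term_le (by omega : 0 < n + M) hs hs1).trans_eq ?_
        push_cast
        ring_nf
    _ = (M : ℝ) ^ (-s) - ((K + M : ℕ) : ℝ) ^ (-s) := by
        simpa using Finset.sum_range_sub' (fun n ↦ ((n + M : ℕ) : ℝ) ^ (-s)) K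
    _ ≤ (M : ℝ) ^ (-s) := sub_le_self _ (rpow_nonneg (Nat.cast_nonneg _) _)

lemma summable_term_add {M : ℕ} (hM : 0 < M) {s : ℝ} (hs : 0 < s) (hs1 : s ≠ 1) :
    Summable fun n ↦ term (n + M) s :=
  (summable_mul_left_iff hs.ne').mp <| summable_of_sum_range_le
    (fun _ ↦ mul_nonneg hs.le (term_nonneg _ _)) (sum_range_mul_term_add_le hM hs.le hs1)

lemma mul_tsum_term_add_le {M : ℕ} (hM : 0 < M) {s : ℝ} (hs : 0 ≤ s) (hs1 : s ≠ 1) :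
    s * ∑' n, term (n + M) s ≤ (M : ℝ) ^ (-s) := by
  rw [← tsum_mul_left]
  exact Real.tsum_le_of_sum_range_le (fun n ↦ mul_nonneg hs (term_nonneg _ _))
    (sum_range_mul_term_add_le hM hs hs1)

lemma termTSum_eq_termSum_add_tsum {s : ℝ} (hs : 0 < s) (hs1 : s ≠ 1) (N : ℕ) :
    termTSum s = termSum s N + ∑' n, term (n + (N + 1)) s :=
  ((summable_term_add one_pos hs hs1).sum_add_tsum_nat_add N).symm

lemma mul_termSum {s : ℝ} (hs1 : s ≠ 1) (N : ℕ) :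
    s * termSum s N = 1 / (s - 1) + 1 - ∑ n ∈ Finset.Icc 1 N, (n : ℝ) ^ (-s)
      - ((N : ℝ) + 1) ^ (1 - s) / (s - 1) - ((N : ℝ) + 1) ^ (-s) := by
  induction N with
  | zero => simp [termSum]
  | succ N ih =>
    rw [termSum, Finset.sum_range_succ, ← termSum, mul_add, ih, mul_term_eq N.succ_pos hs1,
      Finset.sum_Icc_succ_top (by omega)]
    push_cast
    ring

/-- `s * (s - 1) * term (n + 1) s` in closed form, which is entire in `s`. -/
noncomputable def scaledTerm (n : ℕ) (s : ℂ) : ℂ :=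
  ((n : ℂ) + 1) ^ (1 - s) - ((n : ℂ) + 2) ^ (1 - s) - (s - 1) * ((n : ℂ) + 2) ^ (-s)

lemma scaledTerm_ofReal (n : ℕ) (s : ℝ) :
    scaledTerm n s = ((s * (s - 1) * term (n + 1) s : ℝ) : ℂ) := by
  rw [mul_sub_one_mul_term n.succ_pos, scaledTerm]
  push_cast
  rw [Complex.ofReal_cpow (by positivity), Complex.ofReal_cpow (by positivity),
    Complex.ofReal_cpow (by positivity)]
  push_cast
  ring_nf

lemma scaledTerm_eq_integral (n : ℕ) {s : ℂ} (hs0 : s ≠ 0) (hs1 : s ≠ 1) :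
    scaledTerm n s = s * (s - 1) *
      ∫ x : ℝ in (n + 1 : ℝ)..(n + 2), ((x : ℂ) - (n + 1)) * (x : ℂ) ^ (-(s + 1)) := by
  have hpos : ∀ x ∈ uIcc (n + 1 : ℝ) (n + 2), 0 < x := fun x hx ↦
    (by positivity : (0 : ℝ) < n + 1).trans_le
      (uIcc_of_le (by linarith : (n + 1 : ℝ) ≤ n + 2) ▸ hx).1
  have h0 : (0 : ℝ) ∉ uIcc (n + 1 : ℝ) (n + 2) := fun h ↦ (hpos 0 h).false
  have hsplit : ∀ x ∈ uIcc (n + 1 : ℝ) (n + 2),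
      ((x : ℂ) - (n + 1)) * (x : ℂ) ^ (-(s + 1))
        = (x : ℂ) ^ (-s) - (n + 1) * (x : ℂ) ^ (-(s + 1)) := by
    intro x hx
    have hx0 : (x : ℂ) ≠ 0 := Complex.ofReal_ne_zero.mpr (hpos x hx).ne'
    rw [show -s = -(s + 1) + 1 by ring, Complex.cpow_add _ _ hx0, Complex.cpow_one]
    ring
  have hint (r : ℂ) :
      IntervalIntegrable (fun x : ℝ ↦ (x : ℂ) ^ r) volume (n + 1 : ℝ) (n + 2) :=
    intervalIntegral.intervalIntegrable_cpow (Or.inr h0)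
  rw [intervalIntegral.integral_congr hsplit,
    intervalIntegral.integral_sub (hint _) ((hint _).const_mul _),
    intervalIntegral.integral_const_mul,
    integral_cpow (Or.inr ⟨fun h ↦ hs1 (by simpa using h), h0⟩),
    integral_cpow (Or.inr ⟨fun h ↦ hs0 (by simpa using h), h0⟩),
    show -s + 1 = 1 - s by ring, show -(s + 1) + 1 = -s by ring]
  have hpow : ∀ c : ℂ, c ≠ 0 → c ^ (1 - s) = c * c ^ (-s) := fun c hc ↦ by
    rw [sub_eq_neg_add, Complex.cpow_add _ _ hc, Complex.cpow_one, mul_comm]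
  have h1 : (n : ℂ) + 1 ≠ 0 := by exact_mod_cast n.succ_ne_zero
  have h2 : (n : ℂ) + 2 ≠ 0 := by exact_mod_cast (n + 1).succ_ne_zero
  have h1s : 1 - s ≠ 0 := sub_ne_zero.mpr (Ne.symm hs1)
  push_cast
  rw [scaledTerm, hpow _ h1, hpow _ h2]
  field_simp
  ring

lemma norm_scaledTerm_le (n : ℕ) {s : ℂ} (hs : 0 < s.re) :
    ‖scaledTerm n s‖ ≤ ‖s‖ * ‖s - 1‖ * ((n : ℝ) + 1) ^ (-(s.re + 1)) := by
  rcases eq_or_ne s 1 with rfl | hs1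
  · simp [scaledTerm]
  have hs0 : s ≠ 0 := fun h ↦ by simp [h] at hs
  rw [scaledTerm_eq_integral n hs0 hs1, norm_mul, norm_mul]
  gcongr
  have hbound : ∀ x ∈ uIoc (n + 1 : ℝ) (n + 2),
      ‖((x : ℂ) - (n + 1)) * (x : ℂ) ^ (-(s + 1))‖ ≤ ((n : ℝ) + 1) ^ (-(s.re + 1)) := by
    intro x hx
    rw [uIoc_of_le (by linarith)] at hx
    have hx0 : 0 < x := (by positivity : (0 : ℝ) < n + 1).trans hx.1
    rw [norm_mul, Complex.norm_cpow_eq_rpow_re_of_pos hx0,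
      show (x : ℂ) - (n + 1) = ((x - (n + 1) : ℝ) : ℂ) by push_cast; ring,
      Complex.norm_real, Real.norm_of_nonneg (by linarith [hx.1])]
    simp only [Complex.neg_re, Complex.add_re, Complex.one_re]
    calc (x - (n + 1)) * x ^ (-(s.re + 1)) ≤ 1 * ((n : ℝ) + 1) ^ (-(s.re + 1)) :=
          mul_le_mul (by linarith [hx.2]) (rpow_le_rpow_of_nonpos (by positivity) hx.1.le
            (by linarith)) (rpow_nonneg hx0.le _) zero_le_one
      _ = _ := one_mul _
  refine (intervalIntegral.norm_integral_le_of_norm_le_const hbound).trans_eq ?_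
  rw [show (n : ℝ) + 2 - (n + 1) = 1 by ring, abs_one, mul_one]

lemma differentiable_scaledTerm (n : ℕ) : Differentiable ℂ (scaledTerm n) := by
  have h1 : (n : ℂ) + 1 ≠ 0 := by exact_mod_cast n.succ_ne_zero
  have h2 : (n : ℂ) + 2 ≠ 0 := by exact_mod_cast (n + 1).succ_ne_zero
  unfold scaledTerm
  fun_prop (disch := first | exact Or.inl h1 | exact Or.inl h2)

lemma differentiableOn_tsum_scaledTerm :
    DifferentiableOn ℂ (fun s ↦ ∑' n, scaledTerm n s) {s | 0 < s.re} := by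
  intro s₀ (hs₀ : 0 < s₀.re)
  set r := s₀.re / 2 with hr
  have hr0 : 0 < r := half_pos hs₀
  have hre : ∀ s ∈ Metric.ball s₀ r, r < s.re := fun s hs ↦ by
    have := (Complex.abs_re_le_norm (s - s₀)).trans_lt (mem_ball_iff_norm.mp hs)
    rw [Complex.sub_re, abs_lt] at this
    linarith
  have hnorm : ∀ s ∈ Metric.ball s₀ r, ‖s‖ ≤ ‖s₀‖ + r := fun s hs ↦ by
    have := norm_le_norm_add_norm_sub' s s₀
    linarith [(mem_ball_iff_norm.mp hs).le]
  have hsum : Summable fun n : ℕ ↦ ((n : ℝ) + 1) ^ (-(r + 1)) := by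
    simpa using (summable_nat_add_iff 1).mpr
      (Real.summable_nat_rpow.mpr (by linarith : -(r + 1) < -1))
  have hdiff := Complex.differentiableOn_tsum_of_summable_norm
    (hsum.mul_left ((‖s₀‖ + r) * (‖s₀‖ + r + 1)))
    (fun n ↦ (differentiable_scaledTerm n).differentiableOn) Metric.isOpen_ball
    fun n s hs ↦ by
      refine (norm_scaledTerm_le n (hr0.trans (hre s hs))).trans ?_
      have h1 : ‖s - 1‖ ≤ ‖s₀‖ + r + 1 := by
        linarith [norm_sub_le s 1, norm_one (α := ℂ), hnorm s hs]
      gcongr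
      · exact hnorm s hs
      · simp
      · exact (hre s hs).le
  exact (hdiff.differentiableAt
    (Metric.isOpen_ball.mem_nhds (Metric.mem_ball_self hr0))).differentiableWithinAt

lemma tsum_scaledTerm_ofReal (s : ℝ) :
    ∑' n, scaledTerm n s = ((s * (s - 1) * termTSum s : ℝ) : ℂ) := by
  simp_rw [scaledTerm_ofReal, ← Complex.ofReal_tsum, tsum_mul_left, termTSum]

lemma riemannZeta₁_ofReal_eq {σ : ℝ} (hσ : 1 < σ) :
    riemannZeta₁ σ = σ - ∑' n, scaledTerm n σ := by
  have hσ1 : (σ : ℂ) - 1 ≠ 0 := by exact_mod_cast (sub_pos.mpr hσ).ne'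
  have hζ : riemannZeta σ = ((∑' n : ℕ, 1 / (n + 1 : ℝ) ^ σ : ℝ) : ℂ) := by
    rw [zeta_eq_tsum_one_div_nat_add_one_cpow (by simpa using hσ), Complex.ofReal_tsum]
    refine tsum_congr fun n ↦ ?_
    rw [Complex.ofReal_div, Complex.ofReal_cpow (by positivity)]
    push_cast
    ring_nf
  rw [riemannZeta₁_eq_mul (by exact_mod_cast hσ.ne'), hζ, tsum_scaledTerm_ofReal,
    eq_sub_of_add_eq (zeta_limit_aux1 hσ)]
  push_cast
  field_simp
  ring

lemma riemannZeta₁_eq_sub_tsum_scaledTerm {s : ℂ} (hs : 0 < s.re) :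
    riemannZeta₁ s = s - ∑' n, scaledTerm n s := by
  have hU : IsOpen {s : ℂ | 0 < s.re} := isOpen_lt continuous_const Complex.continuous_re
  refine (differentiable_riemannZeta₁.differentiableOn.analyticOnNhd hU
    ).eqOn_of_preconnected_of_frequently_eq
    ((differentiableOn_id.sub differentiableOn_tsum_scaledTerm).analyticOnNhd hU)
    (convex_halfSpace_re_gt 0).isPreconnected (z₀ := 2) (by simp) ?_ hs
  have hreal : ∀ᶠ σ : ℝ in 𝓝[≠] 2, riemannZeta₁ σ = σ - ∑' n, scaledTerm n σ :=
    eventually_nhdsWithin_of_eventually_nhds <|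
      (eventually_gt_nhds (by norm_num : (1 : ℝ) < 2)).mono fun _ ↦ riemannZeta₁_ofReal_eq
  have hofReal : Tendsto ((↑) : ℝ → ℂ) (𝓝[≠] 2) (𝓝[≠] 2) :=
    Complex.continuous_ofReal.continuousWithinAt.tendsto_nhdsWithin fun _ ht h ↦
      ht (Complex.ofReal_injective (h.trans (Complex.ofReal_ofNat 2).symm))
  exact hofReal.frequently (by exact_mod_cast hreal.frequently)

lemma riemannZeta_ofReal_re {s : ℝ} (hs : 0 < s) (hs1 : s ≠ 1) :
    (riemannZeta s).re = 1 / (s - 1) + 1 - s * termTSum s := by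
  have hs1' : (s : ℂ) - 1 ≠ 0 := by exact_mod_cast sub_ne_zero.mpr hs1
  have h := riemannZeta₁_eq_sub_tsum_scaledTerm (s := s) (by simpa using hs)
  rw [riemannZeta₁_eq_mul (by exact_mod_cast hs1), tsum_scaledTerm_ofReal] at h
  have hζ : riemannZeta s = ((1 / (s - 1) + 1 - s * termTSum s : ℝ) : ℂ) := by
    push_cast at h ⊢
    field_simp
    linear_combination h
  rw [hζ, Complex.ofReal_re]

end ZetaAsymptotics

theorem riemannZeta_re_sub_sum_Icc_ge {s : ℝ} (hs : 0 < s) (hs1 : s ≠ 1) (N : ℕ) :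
    ((N : ℝ) + 1) ^ (1 - s) / (s - 1)
      ≤ (riemannZeta s).re - ∑ n ∈ Finset.Icc 1 N, (n : ℝ) ^ (-s) := by
  have htail := mul_tsum_term_add_le N.succ_pos hs.le hs1
  push_cast at htail
  rw [riemannZeta_ofReal_re hs hs1, termTSum_eq_termSum_add_tsum hs hs1 N, mul_add,
    mul_termSum hs1 N]
  linarith

theorem stmt_1 (α X : ℝ) (hα : 0 < α) (hα1 : α ≠ 1) (hX : 1 ≤ X) :
    (riemannZeta α).re - 1 / ((α - 1) * X ^ (α - 1))
      - (∑ n ∈ Finset.Icc 1 ⌊X⌋₊, (1 : ℝ) / (n : ℝ) ^ α) ≥ -(1 / X ^ α) := by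
  have hX0 : 0 < X := by linarith
  have hXN : X ≤ ⌊X⌋₊ + 1 := (Nat.lt_floor_add_one X).le
  have hgap : (⌊X⌋₊ + 1 - X) * X ^ (-α) ≤ X ^ (-α) :=
    mul_le_of_le_one_left (rpow_nonneg hX0.le _) (by linarith [Nat.floor_le hX0.le])
  have hζ := riemannZeta_re_sub_sum_Icc_ge hα hα1 ⌊X⌋₊
  have hint := rpow_one_sub_sub_div_le_mul_rpow_neg hα.le hα1 hX0 hXN
  rw [sub_div] at hint
  have hsum : ∑ n ∈ Finset.Icc 1 ⌊X⌋₊, (1 : ℝ) / (n : ℝ) ^ α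
      = ∑ n ∈ Finset.Icc 1 ⌊X⌋₊, (n : ℝ) ^ (-α) := by
    simp_rw [rpow_neg (Nat.cast_nonneg _), one_div]
  have hmain : 1 / ((α - 1) * X ^ (α - 1)) = X ^ (1 - α) / (α - 1) := by
    rw [show 1 - α = -(α - 1) by ring, rpow_neg hX0.le, one_div, mul_inv, div_eq_inv_mul]
  rw [hsum, hmain, one_div, ← rpow_neg hX0.le]
  linarith
end

section
/- For all real α > 0 with α ≠ 1, we have ζ(α) > 1/(α−1) and ζ(α)·(α−1) > 0. -/
/-!
Put `D_a(z) = a^{-z} - ∫_a^{a+1} x^{-z} dx` (`cpowSubIntegral z a`). Since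
`|D_a(z)| ≤ |z| a^{-re z - 1}`, the series `∑_{n ≥ 1} D_n(z)` converges locally uniformly on
`re z > 0`, and for `re z > 1` telescoping gives `ζ(z) = 1/(z-1) + ∑ D_n(z)`. After multiplying
by `z - 1` both sides are holomorphic on the whole half-plane `re z > 0` (the left side is
`riemannZeta₁`), so the identity persists there by analytic continuation. For real `α > 0` the
integrand is decreasing, so `0 < D_n(α) ≤ n^{-α} - (n+1)^{-α}`; hence `ζ(α) = 1/(α-1) + T` with
`0 < T ≤ 1`, which gives both claims.
-/

open Complex Filter Topology

noncomputable def cpowSubIntegral (z : ℂ) (a : ℝ) : ℂ :=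
  (a : ℂ) ^ (-z) - ∫ x in a..a + 1, (x : ℂ) ^ (-z)

noncomputable def rpowSubIntegral (s a : ℝ) : ℝ :=
  a ^ (-s) - ∫ x in a..a + 1, x ^ (-s)

lemma zero_notMem_uIcc_add_one {a : ℝ} (ha : 0 < a) : (0 : ℝ) ∉ Set.uIcc a (a + 1) := by
  rw [Set.uIcc_of_le (by linarith)]
  exact fun h => absurd h.1 (not_le.mpr ha)

lemma summable_nat_add_one_rpow {p : ℝ} (hp : p < -1) :
    Summable fun n : ℕ => ((n : ℝ) + 1) ^ p := by
  simpa using (summable_nat_add_iff 1).mpr (Real.summable_nat_rpow.mpr hp)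

section Complex

lemma norm_ofReal_cpow_sub_ofReal_cpow_le {a x : ℝ} (ha : 0 < a) (hx : a ≤ x) {z : ℂ}
    (hz : -1 ≤ z.re) :
    ‖(a : ℂ) ^ (-z) - (x : ℂ) ^ (-z)‖ ≤ ‖z‖ * a ^ (-z.re - 1) * (x - a) := by
  have hderiv : ∀ y ∈ Set.Icc a x, HasDerivWithinAt (fun t : ℝ => (t : ℂ) ^ (-z))
      (-z * (y : ℂ) ^ (-z - 1)) (Set.Icc a x) y := fun y hy =>
    ((hasStrictDerivAt_cpow_const (ofReal_mem_slitPlane.mpr (ha.trans_le hy.1))).hasDerivAt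
      |>.comp_ofReal).hasDerivWithinAt
  have hbound : ∀ y ∈ Set.Icc a x,
      ‖-z * (y : ℂ) ^ (-z - 1)‖ ≤ ‖z‖ * a ^ (-z.re - 1) := by
    intro y hy
    rw [norm_mul, norm_neg, norm_cpow_eq_rpow_re_of_pos (ha.trans_le hy.1)]
    gcongr
    simp only [sub_re, neg_re, one_re]
    exact Real.rpow_le_rpow_of_nonpos ha hy.1 (by linarith)
  have := (convex_Icc a x).norm_image_sub_le_of_norm_hasDerivWithin_le hderiv hbound
    (Set.left_mem_Icc.mpr hx) (Set.right_mem_Icc.mpr hx)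
  rwa [norm_sub_rev, Real.norm_of_nonneg (sub_nonneg.mpr hx)] at this

lemma norm_cpowSubIntegral_le {a : ℝ} (ha : 0 < a) {z : ℂ} (hz : -1 ≤ z.re) :
    ‖cpowSubIntegral z a‖ ≤ ‖z‖ * a ^ (-z.re - 1) := by
  have hsub : cpowSubIntegral z a = ∫ x in a..a + 1, ((a : ℂ) ^ (-z) - (x : ℂ) ^ (-z)) := by
    rw [intervalIntegral.integral_sub intervalIntegrable_const
      (intervalIntegral.intervalIntegrable_cpow (Or.inr (zero_notMem_uIcc_add_one ha))),
      intervalIntegral.integral_const, add_sub_cancel_left, one_smul, cpowSubIntegral]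
  have hpoint : ∀ x ∈ Set.uIoc a (a + 1),
      ‖(a : ℂ) ^ (-z) - (x : ℂ) ^ (-z)‖ ≤ ‖z‖ * a ^ (-z.re - 1) := by
    intro x hx
    rw [Set.uIoc_of_le (by linarith)] at hx
    calc ‖(a : ℂ) ^ (-z) - (x : ℂ) ^ (-z)‖ ≤ ‖z‖ * a ^ (-z.re - 1) * (x - a) :=
          norm_ofReal_cpow_sub_ofReal_cpow_le ha hx.1.le hz
      _ ≤ ‖z‖ * a ^ (-z.re - 1) := mul_le_of_le_one_right (by positivity) (by linarith [hx.2])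
  simpa [hsub] using intervalIntegral.norm_integral_le_of_norm_le_const hpoint

lemma sub_one_mul_cpowSubIntegral {a : ℝ} (ha : 0 < a) (z : ℂ) :
    (z - 1) * cpowSubIntegral z a =
      (z - 1) * (a : ℂ) ^ (-z) + ((a + 1 : ℝ) : ℂ) ^ (1 - z) - (a : ℂ) ^ (1 - z) := by
  rcases eq_or_ne z 1 with rfl | hz
  · simp
  have hz' : 1 - z ≠ 0 := sub_ne_zero.mpr hz.symm
  rw [cpowSubIntegral, integral_cpow (Or.inr ⟨by contrapose! hz; simpa using hz,
    zero_notMem_uIcc_add_one ha⟩), neg_add_eq_sub]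
  field_simp
  ring

lemma differentiable_sub_one_mul_cpowSubIntegral {a : ℝ} (ha : 0 < a) :
    Differentiable ℂ fun z => (z - 1) * cpowSubIntegral z a := by
  have hpos : ∀ b : ℝ, 0 < b → (b : ℂ) ≠ 0 := fun b hb => ofReal_ne_zero.mpr hb.ne'
  simp_rw [sub_one_mul_cpowSubIntegral ha]
  intro z
  exact (((differentiableAt_id.sub_const 1).mul (differentiableAt_id.neg.const_cpow
    (Or.inl (hpos a ha)))).add ((differentiableAt_const 1).sub differentiableAt_id |>.const_cpow
    (Or.inl (hpos (a + 1) (by linarith))))).sub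
    (((differentiableAt_const 1).sub differentiableAt_id).const_cpow (Or.inl (hpos a ha)))

lemma norm_sub_one_mul_cpowSubIntegral_le {a : ℝ} (ha : 0 < a) {z : ℂ} (hz : -1 ≤ z.re) :
    ‖(z - 1) * cpowSubIntegral z a‖ ≤ (‖z‖ + 1) * ‖z‖ * a ^ (-z.re - 1) := by
  rw [norm_mul, mul_assoc]
  exact mul_le_mul (norm_sub_le _ _ |>.trans_eq (by rw [norm_one]))
    (norm_cpowSubIntegral_le ha hz) (norm_nonneg _) (by positivity)

lemma differentiableOn_tsum_sub_one_mul_cpowSubIntegral :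
    DifferentiableOn ℂ (fun z => ∑' n : ℕ, (z - 1) * cpowSubIntegral z (n + 1))
      {z | 0 < z.re} := by
  intro z₀ (hz₀ : 0 < z₀.re)
  set V : Set ℂ := {w | z₀.re / 2 < w.re ∧ ‖w‖ < ‖z₀‖ + 1}
  have hV : IsOpen V := (isOpen_lt continuous_const continuous_re).inter
    (isOpen_lt continuous_norm continuous_const)
  have hz₀V : z₀ ∈ V := ⟨by linarith, by linarith⟩
  have hdiff := differentiableOn_tsum_of_summable_norm
    ((summable_nat_add_one_rpow (p := -(z₀.re / 2) - 1) (by linarith)).mul_left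
      ((‖z₀‖ + 1 + 1) * (‖z₀‖ + 1)))
    (fun n => (differentiable_sub_one_mul_cpowSubIntegral n.cast_add_one_pos).differentiableOn)
    hV fun n w ⟨hre, hnorm⟩ => by
      refine (norm_sub_one_mul_cpowSubIntegral_le n.cast_add_one_pos (by linarith)).trans ?_
      gcongr
      exact le_add_of_nonneg_left n.cast_nonneg
  exact (hdiff.differentiableAt (hV.mem_nhds hz₀V)).differentiableWithinAt

lemma tendsto_natCast_add_one_cpow_nhds_zero {s : ℂ} (hs : s.re < 0) :
    Tendsto (fun N : ℕ => (((N : ℝ) + 1 : ℝ) : ℂ) ^ s) atTop (𝓝 0) := by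
  rw [tendsto_zero_iff_norm_tendsto_zero]
  simp_rw [norm_cpow_eq_rpow_re_of_pos (Nat.cast_add_one_pos _)]
  simpa [Function.comp_def] using (tendsto_rpow_neg_atTop (neg_pos.mpr hs)).comp
    (tendsto_atTop_add_const_right _ 1 tendsto_natCast_atTop_atTop)

lemma hasSum_nat_add_one_cpow_neg {z : ℂ} (hz : 1 < z.re) :
    HasSum (fun n : ℕ => (((n : ℝ) + 1 : ℝ) : ℂ) ^ (-z)) (riemannZeta z) := by
  have hsum : Summable fun n : ℕ => (((n : ℝ) + 1 : ℝ) : ℂ) ^ (-z) :=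
    .of_norm_bounded (summable_nat_add_one_rpow (p := -z.re) (by linarith)) fun n => by
      rw [norm_cpow_eq_rpow_re_of_pos (Nat.cast_add_one_pos n), neg_re]
  convert hsum.hasSum
  rw [zeta_eq_tsum_one_div_nat_add_one_cpow hz]
  simp [cpow_neg]

lemma hasSum_sub_one_mul_cpowSubIntegral {z : ℂ} (hz : 1 < z.re) :
    HasSum (fun n : ℕ => (z - 1) * cpowSubIntegral z (n + 1))
      ((z - 1) * riemannZeta z - 1) := by
  let f : ℕ → ℂ := fun N => (((N : ℝ) + 1 : ℝ) : ℂ) ^ (1 - z)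
  have hsum : Summable fun n : ℕ => (z - 1) * cpowSubIntegral z (n + 1) :=
    .of_norm_bounded ((summable_nat_add_one_rpow (p := -z.re - 1) (by linarith)).mul_left
      ((‖z‖ + 1) * ‖z‖)) fun n => by
        simpa [mul_assoc] using norm_sub_one_mul_cpowSubIntegral_le n.cast_add_one_pos
          (z := z) (by linarith)
  have hpartial : ∀ N, ∑ n ∈ Finset.range N, (z - 1) * cpowSubIntegral z (n + 1) =
      (z - 1) * ∑ n ∈ Finset.range N, (((n : ℝ) + 1 : ℝ) : ℂ) ^ (-z) + (f N - f 0) := by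
    intro N
    rw [← Finset.sum_range_sub, Finset.mul_sum, ← Finset.sum_add_distrib]
    refine Finset.sum_congr rfl fun n _ => ?_
    rw [sub_one_mul_cpowSubIntegral n.cast_add_one_pos]
    simp only [f, Nat.cast_succ]
    ring_nf
  rw [hsum.hasSum_iff_tendsto_nat]
  simp_rw [hpartial]
  convert ((hasSum_nat_add_one_cpow_neg hz).tendsto_sum_nat.const_mul (z - 1)).add
    ((tendsto_natCast_add_one_cpow_nhds_zero (s := 1 - z) (by simp; linarith)).sub_const (f 0))
    using 2
  simp [f, sub_eq_add_neg]

lemma riemannZeta₁_eq_one_add_tsum {z : ℂ} (hz : 0 < z.re) :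
    riemannZeta₁ z = 1 + ∑' n : ℕ, (z - 1) * cpowSubIntegral z (n + 1) := by
  have hU : IsOpen {z : ℂ | 0 < z.re} := isOpen_lt continuous_const continuous_re
  have hsum := (differentiableOn_const 1).add differentiableOn_tsum_sub_one_mul_cpowSubIntegral
  refine (differentiable_riemannZeta₁.differentiableOn.analyticOnNhd hU)
    |>.eqOn_of_preconnected_of_eventuallyEq (hsum.analyticOnNhd hU)
    (convex_halfSpace_re_gt 0).isPreconnected (z₀ := 2) (by simp) ?_ hz
  filter_upwards [(isOpen_lt continuous_const continuous_re).mem_nhds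
    (by simp : (1 : ℝ) < (2 : ℂ).re)] with w (hw : 1 < w.re)
  have hw1 : w - 1 ≠ 0 := sub_ne_zero.mpr (ne_of_apply_ne re (by simp; linarith))
  rw [Pi.add_apply, (hasSum_sub_one_mul_cpowSubIntegral hw).tsum_eq,
    riemannZeta_eq_inv_sub_mul (sub_ne_zero.mp hw1), mul_inv_cancel_left₀ hw1]
  ring

lemma riemannZeta_eq_inv_sub_add_tsum {z : ℂ} (hz : 0 < z.re) (hz1 : z ≠ 1) :
    riemannZeta z = (z - 1)⁻¹ + ∑' n : ℕ, cpowSubIntegral z (n + 1) := by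
  rw [riemannZeta_eq_inv_sub_mul hz1, riemannZeta₁_eq_one_add_tsum hz, tsum_mul_left, mul_add,
    mul_one, inv_mul_cancel_left₀ (sub_ne_zero.mpr hz1)]

end Complex

section Real

lemma cpowSubIntegral_ofReal {a : ℝ} (ha : 0 < a) (s : ℝ) :
    cpowSubIntegral s a = rpowSubIntegral s a := by
  have hcpow : ∀ x : ℝ, 0 ≤ x → (x : ℂ) ^ (-(s : ℂ)) = ((x ^ (-s) : ℝ) : ℂ) :=
    fun x hx => by rw [ofReal_cpow hx, ofReal_neg]
  rw [cpowSubIntegral, rpowSubIntegral, ofReal_sub, ← intervalIntegral.integral_ofReal,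
    hcpow a ha.le, intervalIntegral.integral_congr fun x hx => hcpow x ?_]
  rw [Set.uIcc_of_le (by linarith)] at hx
  linarith [hx.1]

lemma rpowSubIntegral_pos {s a : ℝ} (hs : 0 < s) (ha : 0 < a) : 0 < rpowSubIntegral s a := by
  have hcont : ContinuousOn (fun x : ℝ => x ^ (-s)) (Set.Icc a (a + 1)) :=
    continuousOn_id.rpow_const fun x hx => Or.inl (ha.trans_le hx.1).ne'
  have hlt : ∫ x in a..a + 1, x ^ (-s) < ∫ _ in a..a + 1, a ^ (-s) :=
    intervalIntegral.integral_lt_integral_of_continuousOn_of_le_of_exists_lt (by linarith)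
      hcont continuousOn_const
      (fun x hx => Real.rpow_le_rpow_of_nonpos ha hx.1.le (by linarith))
      ⟨a + 1, by simp, Real.rpow_lt_rpow_of_neg ha (by linarith) (by linarith)⟩
  rw [rpowSubIntegral, sub_pos]
  simpa using hlt

lemma rpowSubIntegral_le {s a : ℝ} (hs : 0 ≤ s) (ha : 0 < a) :
    rpowSubIntegral s a ≤ a ^ (-s) - (a + 1) ^ (-s) := by
  have hint : IntervalIntegrable (fun x : ℝ => x ^ (-s)) MeasureTheory.volume a (a + 1) :=
    intervalIntegral.intervalIntegrable_rpow (Or.inr (zero_notMem_uIcc_add_one ha))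
  have hle : ∫ _ in a..a + 1, (a + 1) ^ (-s) ≤ ∫ x in a..a + 1, x ^ (-s) :=
    intervalIntegral.integral_mono_on (by linarith) intervalIntegrable_const hint
      fun x hx => Real.rpow_le_rpow_of_nonpos (ha.trans_le hx.1) hx.2 (by linarith)
  rw [rpowSubIntegral]
  simp only [intervalIntegral.integral_const, add_sub_cancel_left, one_smul] at hle
  linarith

lemma sum_range_rpowSubIntegral_le_one {s : ℝ} (hs : 0 ≤ s) (N : ℕ) :
    ∑ n ∈ Finset.range N, rpowSubIntegral s (n + 1) ≤ 1 := by
  let f : ℕ → ℝ := fun n => ((n : ℝ) + 1) ^ (-s)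
  calc ∑ n ∈ Finset.range N, rpowSubIntegral s (n + 1)
      ≤ ∑ n ∈ Finset.range N, (f n - f (n + 1)) :=
        Finset.sum_le_sum fun n _ => by
          simpa [f, add_assoc, one_add_one_eq_two] using rpowSubIntegral_le hs n.cast_add_one_pos
    _ = 1 - f N := by rw [Finset.sum_range_sub']; simp [f]
    _ ≤ 1 := sub_le_self _ (Real.rpow_nonneg N.cast_add_one_pos.le _)

lemma tsum_rpowSubIntegral_mem_Ioc {s : ℝ} (hs : 0 < s) :
    ∑' n : ℕ, rpowSubIntegral s (n + 1) ∈ Set.Ioc 0 1 := by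
  have hnonneg : ∀ n : ℕ, 0 ≤ rpowSubIntegral s (n + 1) :=
    fun n => (rpowSubIntegral_pos hs n.cast_add_one_pos).le
  have hsum := summable_of_sum_range_le hnonneg (sum_range_rpowSubIntegral_le_one hs.le)
  exact ⟨hsum.tsum_pos hnonneg 0 (rpowSubIntegral_pos hs (by simp)),
    Real.tsum_le_of_sum_range_le hnonneg (sum_range_rpowSubIntegral_le_one hs.le)⟩

lemma riemannZeta_ofReal_re {s : ℝ} (hs : 0 < s) (hs1 : s ≠ 1) :
    (riemannZeta s).re = (s - 1)⁻¹ + ∑' n : ℕ, rpowSubIntegral s (n + 1) := by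
  rw [riemannZeta_eq_inv_sub_add_tsum (by simpa) (by exact_mod_cast hs1),
    tsum_congr fun n => cpowSubIntegral_ofReal n.cast_add_one_pos s, ← ofReal_tsum,
    ← ofReal_one, ← ofReal_sub, ← ofReal_inv, ← ofReal_add, ofReal_re]

end Real

theorem stmt_5 (α : ℝ) (hα : 0 < α) (hα1 : α ≠ 1) :
    (riemannZeta α).re > 1 / (α - 1) ∧ (riemannZeta α).re * (α - 1) > 0 := by
  obtain ⟨hT0, hT1⟩ := tsum_rpowSubIntegral_mem_Ioc hα
  rw [riemannZeta_ofReal_re hα hα1, one_div]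
  refine ⟨by linarith, ?_⟩
  rw [add_mul, inv_mul_cancel₀ (sub_ne_zero.mpr hα1)]
  nlinarith
end

section
/- Let α and β be reals with α ≤ 1/2 and β > α, and let f : ℤ⁺ → ℂ be multiplicative with f(p) = p^{1−α}·f'(p) for a multiplicative f'. Suppose A(t) := ∑_{ℓ ≤ t,(ℓ,q)=1} μ²(ℓ) f'(ℓ) satisfies A(t) = c·(log t + b) + O*(K/√t) for all t > 0, with constants c, b, K. Then, for α < 1/2 and all X ≥ 1, ∑_{ℓ ≤ X,(ℓ,q)=1} μ²(ℓ)f(ℓ) = c·X^{1−α}/(1−α) + O*( (1 + (2−2α)/(1−2α))·K·X^{1/2−α} + C ), where C depends only on c, b, α. -/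
open ArithmeticFunction
open scoped Classical

theorem stmt_19 (c b α : ℝ) (hα : α < 1 / 2) :
    ∃ C : ℝ, ∀ (β : ℝ), α < β → ∀ (q : ℕ), 0 < q →
      ∀ (f f' : ArithmeticFunction ℂ), f.IsMultiplicative → f'.IsMultiplicative →
      (∀ ℓ : ℕ, Squarefree ℓ → f ℓ = ((ℓ : ℝ) ^ (1 - α) : ℝ) * f' ℓ) →
      ∀ K : ℝ,
      (∀ t : ℝ, 0 < t →
        ‖(∑ ℓ ∈ Finset.Icc 1 ⌊t⌋₊,
            if Nat.gcd ℓ q = 1 then (ArithmeticFunction.moebius ℓ : ℂ) ^ 2 * f' ℓ else 0)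
          - (c : ℂ) * (Real.log t + b)‖ ≤ K / Real.sqrt t) →
      ∀ X : ℝ, 1 ≤ X →
        ‖(∑ ℓ ∈ Finset.Icc 1 ⌊X⌋₊,
            if Nat.gcd ℓ q = 1 then (ArithmeticFunction.moebius ℓ : ℂ) ^ 2 * f ℓ else 0)
          - (c : ℂ) * (X ^ (1 - α) : ℝ) / ((1 - α : ℝ) : ℂ)‖
          ≤ (1 + (2 - 2 * α) / (1 - 2 * α)) * K * X ^ (1 / 2 - α) + C := by
  have hα1 : (0:ℝ) < 1 - α := by linarith
  have hα2 : (0:ℝ) < 1/2 - α := by linarith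
  refine ⟨‖(c : ℂ) * ((b - (1 - α)⁻¹ : ℝ) : ℂ)‖, ?_⟩
  intro β hβ q hq f f' hf hf' hff' K hK X hX
  have hX0 : (0:ℝ) < X := by linarith
  set a : ℕ → ℂ := fun ℓ => if Nat.gcd ℓ q = 1 then (ArithmeticFunction.moebius ℓ : ℂ) ^ 2 * f' ℓ else 0 with ha
  have ha0 : a 0 = 0 := by simp [ha]
  set A : ℝ → ℂ := fun t => ∑ k ∈ Finset.Icc 0 ⌊t⌋₊, a k with hA
  have hAeq : ∀ t : ℝ, (∑ ℓ ∈ Finset.Icc 1 ⌊t⌋₊, a ℓ) = A t := by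
    intro t
    have h0 : A t = ∑ k ∈ Finset.Icc 0 ⌊t⌋₊, a k := rfl
    rw [h0, Finset.Icc_eq_cons_Ioc (Nat.zero_le _), Finset.sum_cons, ha0, zero_add,
      ← Finset.Icc_add_one_left_eq_Ioc, zero_add]
  -- K is nonnegative
  have hK0 : 0 ≤ K := by
    have h := hK 1 one_pos
    rw [Real.sqrt_one, div_one] at h
    exact le_trans (norm_nonneg _) h
  -- error bound for A
  have hE : ∀ t : ℝ, 0 < t →
      ‖A t - (c : ℂ) * ((Real.log t : ℂ) + (b : ℂ))‖ ≤ K / Real.sqrt t := by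
    intro t ht
    have := hK t ht
    rw [hAeq t] at this
    exact this
  -- the weight function and its derivative
  set w : ℝ → ℂ := fun t => ((t ^ (1 - α) : ℝ) : ℂ) with hw
  set d : ℝ → ℂ := fun t => (((1 - α) * t ^ (-α) : ℝ) : ℂ) with hd
  have hwd : ∀ t : ℝ, 0 < t → HasDerivAt w (d t) t := by
    intro t ht
    have h1 : HasDerivAt (fun x : ℝ => x ^ (1 - α)) ((1 - α) * t ^ (1 - α - 1)) t :=
      Real.hasDerivAt_rpow_const (Or.inl ht.ne')
    have he : (1 : ℝ) - α - 1 = -α := by ring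
    rw [he] at h1
    exact h1.ofReal_comp
  -- continuity facts
  have hdc : ContinuousOn d (Set.Icc 1 X) := by
    refine Complex.continuous_ofReal.comp_continuousOn ?_
    have hc1 : ContinuousOn (fun t : ℝ => t ^ (-α)) (Set.Icc 1 X) :=
      fun t ht => (Real.continuousAt_rpow_const t (-α)
        (Or.inl (lt_of_lt_of_le one_pos ht.1).ne')).continuousWithinAt
    exact continuousOn_const.mul hc1
  have hdint : MeasureTheory.IntegrableOn d (Set.Icc 1 X) :=
    hdc.integrableOn_Icc
  -- deriv w agrees with d on [1, X]
  have hderiv_eq : Set.EqOn (fun t => deriv w t) d (Set.Icc 1 X) := by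
    intro t ht
    exact (hwd t (lt_of_lt_of_le one_pos ht.1)).deriv
  have hwint : MeasureTheory.IntegrableOn (deriv w) (Set.Icc 1 X) :=
    hdint.congr_fun (fun t ht => (hderiv_eq ht).symm) measurableSet_Icc
  -- Abel summation
  have habel : ∑ k ∈ Finset.Icc 0 ⌊X⌋₊, w k * a k =
      w X * A X - ∫ t in Set.Ioc 1 X, deriv w t * A t := by
    exact sum_mul_eq_sub_integral_mul₀ a ha0 X
      (fun t ht => (hwd t (lt_of_lt_of_le one_pos ht.1)).differentiableAt) hwint
  have hint_congr : (∫ t in Set.Ioc 1 X, deriv w t * A t) = ∫ t in Set.Ioc 1 X, d t * A t := by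
    refine MeasureTheory.setIntegral_congr_fun measurableSet_Ioc (fun t ht => ?_)
    rw [show deriv w t = d t from hderiv_eq (Set.Ioc_subset_Icc_self ht)]
  rw [hint_congr] at habel
  -- identify the goal sum
  have hsum : (∑ ℓ ∈ Finset.Icc 1 ⌊X⌋₊,
      if Nat.gcd ℓ q = 1 then (ArithmeticFunction.moebius ℓ : ℂ) ^ 2 * f ℓ else 0)
      = ∑ k ∈ Finset.Icc 0 ⌊X⌋₊, w k * a k := by
    rw [Finset.Icc_eq_cons_Ioc (Nat.zero_le _), Finset.sum_cons, ha0, mul_zero, zero_add,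
      ← Finset.Icc_add_one_left_eq_Ioc]
    refine Finset.sum_congr rfl (fun ℓ hℓ => ?_)
    simp only [ha, hw]
    by_cases hg : Nat.gcd ℓ q = 1
    · simp only [hg, if_true]
      by_cases hsf : Squarefree ℓ
      · rw [hff' ℓ hsf]; ring
      · rw [ArithmeticFunction.moebius_eq_zero_of_not_squarefree hsf]
        push_cast
        ring
    · simp [hg]
  -- auxiliary functions
  set g : ℝ → ℂ := fun t => (c : ℂ) * ((Real.log t : ℂ) + (b : ℂ)) with hg'
  set H : ℝ → ℂ := fun t => (c : ℂ) * (((t ^ (1 - α) : ℝ) : ℂ) * ((Real.log t : ℂ) + (b : ℂ))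
      - ((t ^ (1 - α) : ℝ) : ℂ) / ((1 - α : ℝ) : ℂ)) with hH'
  have h1α : ((1 - α : ℝ) : ℂ) ≠ 0 := Complex.ofReal_ne_zero.mpr hα1.ne'
  -- FTC for the main-term integral
  have hHderiv : ∀ t ∈ Set.uIcc (1:ℝ) X, HasDerivAt H (d t * g t) t := by
    intro t ht
    rw [Set.uIcc_of_le hX] at ht
    have ht0 : 0 < t := lt_of_lt_of_le one_pos ht.1
    have h1 := hwd t ht0
    have hlog : HasDerivAt (fun y : ℝ => ((Real.log y : ℂ) + (b : ℂ)))
        ((t⁻¹ : ℝ) : ℂ) t := ((Real.hasDerivAt_log ht0.ne').ofReal_comp).add_const _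
    have h2 := ((h1.mul hlog).sub (h1.div_const ((1 - α : ℝ) : ℂ))).const_mul (c : ℂ)
    refine h2.congr_deriv (Eq.symm ?_)
    have hre : t ^ (1 - α) = t ^ (-α) * t := by
      rw [← Real.rpow_add_one ht0.ne' (-α)]
      ring_nf
    simp only [hd, hg', hw]
    rw [hre]
    push_cast
    have htC : (t : ℂ) ≠ 0 := Complex.ofReal_ne_zero.mpr ht0.ne'
    have h1α' : (1 : ℂ) - (α : ℂ) ≠ 0 := by
      intro hcon
      apply h1α
      push_cast
      rw [hcon]
    field_simp
    ring
  have hdgc : ContinuousOn (fun t => d t * g t) (Set.Icc 1 X) := by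
    refine hdc.mul ?_
    refine ContinuousOn.mul continuousOn_const ?_
    refine ContinuousOn.add ?_ continuousOn_const
    refine Complex.continuous_ofReal.comp_continuousOn ?_
    exact fun t ht => (Real.continuousAt_log (lt_of_lt_of_le one_pos ht.1).ne').continuousWithinAt
  have hIg : (∫ t in Set.Ioc 1 X, d t * g t) = H X - H 1 := by
    rw [← intervalIntegral.integral_of_le hX]
    refine intervalIntegral.integral_eq_sub_of_hasDerivAt hHderiv ?_
    rw [intervalIntegrable_iff_integrableOn_Icc_of_le hX]
    exact hdgc.integrableOn_Icc
  have hH1 : H 1 = (c : ℂ) * ((b - (1 - α)⁻¹ : ℝ) : ℂ) := by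
    simp only [hH', Real.one_rpow, Real.log_one]
    push_cast
    ring
  -- integrability of d * A
  have hdintIoc : MeasureTheory.IntegrableOn d (Set.Ioc 1 X) :=
    hdint.mono_set Set.Ioc_subset_Icc_self
  have hAmeas : MeasureTheory.AEStronglyMeasurable A
      (MeasureTheory.volume.restrict (Set.Ioc 1 X)) := by
    have hm : Measurable A := by
      have : A = (fun n : ℕ => ∑ k ∈ Finset.Icc 0 n, a k) ∘ Nat.floor := rfl
      rw [this]
      exact measurable_from_top.comp Nat.measurable_floor
    exact hm.aestronglyMeasurable
  have hAbd : ∀ᵐ t ∂(MeasureTheory.volume.restrict (Set.Ioc 1 X)),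
      ‖A t‖ ≤ ∑ k ∈ Finset.Icc 0 ⌊X⌋₊, ‖a k‖ := by
    refine (MeasureTheory.ae_restrict_iff' measurableSet_Ioc).mpr
      (MeasureTheory.ae_of_all _ (fun t ht => ?_))
    refine le_trans (norm_sum_le _ _) ?_
    refine Finset.sum_le_sum_of_subset_of_nonneg ?_ (fun k _ _ => norm_nonneg _)
    exact Finset.Icc_subset_Icc_right (Nat.floor_le_floor ht.2)
  have hdAint : MeasureTheory.IntegrableOn (fun t => d t * A t) (Set.Ioc 1 X) := by
    have := MeasureTheory.Integrable.bdd_mul hdintIoc hAmeas hAbd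
    refine this.congr ?_
    exact MeasureTheory.ae_of_all _ (fun t => mul_comm _ _)
  have hdgint : MeasureTheory.IntegrableOn (fun t => d t * g t) (Set.Ioc 1 X) :=
    hdgc.integrableOn_Icc.mono_set Set.Ioc_subset_Icc_self
  -- the error integral bound
  have hmajc : ContinuousOn (fun t : ℝ => (1 - α) * K * t ^ (-α - 1/2)) (Set.Icc 1 X) := by
    refine ContinuousOn.mul continuousOn_const ?_
    exact fun t ht => (Real.continuousAt_rpow_const t _
      (Or.inl (lt_of_lt_of_le one_pos ht.1).ne')).continuousWithinAt
  have hmaj_int : MeasureTheory.IntegrableOn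
      (fun t : ℝ => (1 - α) * K * t ^ (-α - 1/2)) (Set.Ioc 1 X) :=
    hmajc.integrableOn_Icc.mono_set Set.Ioc_subset_Icc_self
  have hsplit : (∫ t in Set.Ioc 1 X, d t * A t) - (∫ t in Set.Ioc 1 X, d t * g t)
      = ∫ t in Set.Ioc 1 X, d t * (A t - g t) := by
    rw [← MeasureTheory.integral_sub hdAint hdgint]
    refine MeasureTheory.integral_congr_ae (MeasureTheory.ae_of_all _ (fun t => ?_))
    simp [mul_sub]
  have herr : ‖∫ t in Set.Ioc 1 X, d t * (A t - g t)‖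
      ≤ ∫ t in Set.Ioc 1 X, (1 - α) * K * t ^ (-α - 1/2) := by
    refine MeasureTheory.norm_integral_le_of_norm_le hmaj_int ?_
    refine (MeasureTheory.ae_restrict_iff' measurableSet_Ioc).mpr
      (MeasureTheory.ae_of_all _ (fun t ht => ?_))
    have ht0 : (0:ℝ) < t := lt_trans one_pos ht.1
    rw [norm_mul]
    have h1 : ‖d t‖ = (1 - α) * t ^ (-α) := by
      rw [hd]
      rw [Complex.norm_real, Real.norm_eq_abs, abs_of_nonneg]
      positivity
    rw [h1]
    calc (1 - α) * t ^ (-α) * ‖A t - g t‖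
        ≤ (1 - α) * t ^ (-α) * (K / Real.sqrt t) := by
          refine mul_le_mul_of_nonneg_left (hE t ht0) ?_
          positivity
      _ = (1 - α) * K * t ^ (-α - 1/2) := by
          rw [Real.sqrt_eq_rpow, Real.rpow_sub ht0]
          have h2 : t ^ ((1:ℝ)/2) ≠ 0 := (Real.rpow_pos_of_pos ht0 _).ne'
          field_simp
  have hmajval : (∫ t in Set.Ioc 1 X, (1 - α) * K * t ^ (-α - 1/2))
      = (1 - α) * K * ((X ^ (1/2 - α) - 1) / (1/2 - α)) := by
    rw [← intervalIntegral.integral_of_le hX, intervalIntegral.integral_const_mul,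
      integral_rpow (Or.inl (by linarith))]
    have he : -α - 1/2 + 1 = 1/2 - α := by ring
    rw [he, Real.one_rpow]
  -- rpow arithmetic
  have hwXnorm : ‖w X‖ = X ^ (1 - α) := by
    rw [hw, Complex.norm_real, Real.norm_eq_abs, abs_of_nonneg (Real.rpow_nonneg hX0.le _)]
  have hfirst : ‖w X * (A X - g X)‖ ≤ K * X ^ (1/2 - α) := by
    rw [norm_mul, hwXnorm]
    calc X ^ (1 - α) * ‖A X - g X‖ ≤ X ^ (1 - α) * (K / Real.sqrt X) :=
          mul_le_mul_of_nonneg_left (hE X hX0) (Real.rpow_nonneg hX0.le _)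
      _ = K * X ^ (1/2 - α) := by
          rw [Real.sqrt_eq_rpow, div_eq_mul_inv, ← Real.rpow_neg hX0.le,
            show (1:ℝ)/2 - α = (1 - α) + -(1/2) by ring, Real.rpow_add hX0]
          ring
  -- key algebraic decomposition
  have hkey : (∑ ℓ ∈ Finset.Icc 1 ⌊X⌋₊,
      if Nat.gcd ℓ q = 1 then (ArithmeticFunction.moebius ℓ : ℂ) ^ 2 * f ℓ else 0)
      - (c : ℂ) * (X ^ (1 - α) : ℝ) / ((1 - α : ℝ) : ℂ)
      = w X * (A X - g X)
        - ((∫ t in Set.Ioc 1 X, d t * A t) - (∫ t in Set.Ioc 1 X, d t * g t))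
        + (c : ℂ) * ((b - (1 - α)⁻¹ : ℝ) : ℂ) := by
    rw [hsum, habel, hIg, ← hH1]
    have : w X * g X - H X = (c : ℂ) * (X ^ (1 - α) : ℝ) / ((1 - α : ℝ) : ℂ) := by
      simp only [hw, hg', hH']
      field_simp
      ring
    rw [← this]
    ring
  rw [hkey]
  -- final norm estimates
  have hsecond : ‖(∫ t in Set.Ioc 1 X, d t * A t) - (∫ t in Set.Ioc 1 X, d t * g t)‖
      ≤ (2 - 2*α) / (1 - 2*α) * K * X ^ (1/2 - α) := by
    rw [hsplit]
    refine le_trans herr ?_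
    rw [hmajval]
    have hco : (1 - α) / (1/2 - α) = (2 - 2*α) / (1 - 2*α) := by
      rw [div_eq_div_iff hα2.ne' (by linarith : (0:ℝ) < 1 - 2*α).ne']
      ring
    have hx1 : X ^ (1/2 - α) - 1 ≤ X ^ (1/2 - α) := by linarith
    have hx0 : 0 ≤ X ^ (1/2 - α) - 1 := by
      have := Real.one_le_rpow hX hα2.le
      linarith
    calc (1 - α) * K * ((X ^ (1/2 - α) - 1) / (1/2 - α))
        = (1 - α) / (1/2 - α) * (K * (X ^ (1/2 - α) - 1)) := by ring
      _ ≤ (1 - α) / (1/2 - α) * (K * X ^ (1/2 - α)) := by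
          refine mul_le_mul_of_nonneg_left ?_ (by positivity)
          exact mul_le_mul_of_nonneg_left hx1 hK0
      _ = (2 - 2*α) / (1 - 2*α) * K * X ^ (1/2 - α) := by rw [hco]; ring
  calc ‖w X * (A X - g X)
        - ((∫ t in Set.Ioc 1 X, d t * A t) - (∫ t in Set.Ioc 1 X, d t * g t))
        + (c : ℂ) * ((b - (1 - α)⁻¹ : ℝ) : ℂ)‖
      ≤ ‖w X * (A X - g X)
        - ((∫ t in Set.Ioc 1 X, d t * A t) - (∫ t in Set.Ioc 1 X, d t * g t))‖
        + ‖(c : ℂ) * ((b - (1 - α)⁻¹ : ℝ) : ℂ)‖ := norm_add_le _ _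
    _ ≤ ‖w X * (A X - g X)‖
        + ‖(∫ t in Set.Ioc 1 X, d t * A t) - (∫ t in Set.Ioc 1 X, d t * g t)‖
        + ‖(c : ℂ) * ((b - (1 - α)⁻¹ : ℝ) : ℂ)‖ := by
          exact add_le_add_left (norm_sub_le _ _) _
    _ ≤ K * X ^ (1/2 - α) + (2 - 2*α) / (1 - 2*α) * K * X ^ (1/2 - α)
        + ‖(c : ℂ) * ((b - (1 - α)⁻¹ : ℝ) : ℂ)‖ := by
          exact add_le_add_left (add_le_add hfirst hsecond) _
    _ = (1 + (2 - 2 * α) / (1 - 2 * α)) * K * X ^ (1 / 2 - α)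
        + ‖(c : ℂ) * ((b - (1 - α)⁻¹ : ℝ) : ℂ)‖ := by ring
end
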